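/- arXiv:2303.00743 — 2 statements merged into one kernel-verified Lean document; each statement's English description precedes it below -/
import Mathlib

section
/- Define θ(z) := −∑_{n∈ℤ} exp(πi(n + 1/2)²ω + 2πi(n + 1/2)(z + 1/2)) where ω = exp(2πi/3), and θ₂(z) := θ(z + 1/2). Then for all z, u ∈ ℂ: θ(z + u)·θ(z − u)·θ₂(0)² = θ(z)²·θ₂(u)² − θ₂(z)²·θ(u)². -/
noncomputable section

open Complex ComplexConjugate

/-- ω = exp(2πi/3). -/
def ω : ℂ := Complex.exp (2 * Real.pi * Complex.I / 3)

/-- The lattice Λ = ℤ + ωℤ. -/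
def Lam : Set ℂ := {z : ℂ | ∃ m n : ℤ, z = (m : ℂ) + (n : ℂ) * ω}

/-- The dual lattice Λ* = (4πi/√3)Λ. -/
def LamS : Set ℂ :=
  {z : ℂ | ∃ m n : ℤ,
    z = 4 * (Real.pi : ℂ) * Complex.I / (Real.sqrt 3 : ℂ) * ((m : ℂ) + (n : ℂ) * ω)}

/-- ⟨z,w⟩ = Re (z ⬝ conj w). -/
def pairing (z w : ℂ) : ℝ := (z * conj w).re

/-- K = 4π/3. -/
def Kpt : ℂ := 4 * (Real.pi : ℂ) / 3

/-- 2D_z̄ u = −i(∂ₓu + i∂9u), via the real Fréchet derivative. -/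
def twoDbar (u : ℂ → ℂ) (z : ℂ) : ℂ :=
  -Complex.I * (fderiv ℝ u z 1 + Complex.I * fderiv ℝ u z Complex.I)

/-- The magnetic chiral Dirac operator D_B(α). -/
def DB (U : ℂ → ℂ) (α B : ℂ) (u : ℂ → ℂ × ℂ) (z : ℂ) : ℂ × ℂ :=
  (twoDbar (fun w => (u w).1) z + α * U z * (u z).2 + B * (u z).1,
   α * U (-z) * (u z).1 + twoDbar (fun w => (u w).2) z - B * (u z).2)

/-- The chiral Dirac operator D(α) (no magnetic field). -/
def Dop (U : ℂ → ℂ) (α : ℂ) (u : ℂ → ℂ × ℂ) (z : ℂ) : ℂ × ℂ :=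
  (twoDbar (fun w => (u w).1) z + α * U z * (u z).2,
   α * U (-z) * (u z).1 + twoDbar (fun w => (u w).2) z)

/-- The L²₀ boundary condition. -/
def BC (u : ℂ → ℂ × ℂ) : Prop :=
  ∀ γ ∈ Lam, ∀ z : ℂ,
    u (z + γ) = (Complex.exp (-Complex.I * (pairing γ Kpt : ℂ)) * (u z).1,
                 Complex.exp (Complex.I * (pairing γ Kpt : ℂ)) * (u z).2)

/-- Hypotheses on the potential U. -/
def IsPotential (U : ℂ → ℂ) : Prop :=
  ContDiff ℝ (⊤ : ℕ∞) U ∧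
  (∀ γ ∈ Lam, ∀ z : ℂ,
    U (z + γ) = Complex.exp (-2 * Complex.I * (pairing γ Kpt : ℂ)) * U z) ∧
  (∀ z : ℂ, U (ω * z) = ω * U z) ∧
  (∀ z : ℂ, conj (U (conj z)) = - U (-z))

/-- The Jacobi theta function θ(z) = θ₁(z|ω) = −θ_{1/2,1/2}(z|ω). -/
def θf (z : ℂ) : ℂ :=
  -∑' n : ℤ, Complex.exp ((Real.pi : ℂ) * Complex.I * ((n : ℂ) + 1/2)^2 * ω
      + 2 * (Real.pi : ℂ) * Complex.I * ((n : ℂ) + 1/2) * (z + 1/2))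

/-- θ₂(z) = θ(z + 1/2). -/
def θ2 (z : ℂ) : ℂ := θf (z + 1/2)

/-! Writing `θ(x) θ(y)` as a double series over `(m, n) ∈ ℤ²` and substituting
`m = j + k`, `n = j - k` or `n = j - k - 1` according to the parity of `m - n` turns the product
into a sum of two products of theta functions with characteristics `0` and `1/2` and period
`2ω`, evaluated at `x + y` and `x - y`. For `θ₂(x) θ₂(y)` only one sign changes. Hence every
product in the identity is a bilinear expression in these theta values at `2z`, `2u` and `0`, and
the identity becomes a polynomial one. -/

open Real

def thetaCharTerm (r z τ : ℂ) (n : ℤ) : ℂ :=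
  cexp (π * I * (n + r) ^ 2 * τ + 2 * π * I * (n + r) * z)

/-- The theta function `θ[r, 0](z | τ)` with characteristic `[r, 0]`. -/
def thetaChar (r z τ : ℂ) : ℂ := ∑' n : ℤ, thetaCharTerm r z τ n

lemma thetaCharTerm_eq_mul_jacobiTheta₂_term (r z τ : ℂ) (n : ℤ) :
    thetaCharTerm r z τ n =
      cexp (π * I * r ^ 2 * τ + 2 * π * I * r * z) * jacobiTheta₂_term n (z + r * τ) τ := by
  rw [thetaCharTerm, jacobiTheta₂_term, ← Complex.exp_add]
  ring_nf

lemma summable_norm_thetaCharTerm (r z : ℂ) {τ : ℂ} (hτ : 0 < τ.im) :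
    Summable fun n : ℤ => ‖thetaCharTerm r z τ n‖ := by
  simp only [thetaCharTerm_eq_mul_jacobiTheta₂_term, norm_mul]
  exact (summable_norm_iff.mpr ((summable_jacobiTheta₂_term_iff _ τ).mpr hτ)).mul_left _

lemma hasSum_thetaChar_mul_thetaChar (r z r' z' : ℂ) {τ τ' : ℂ} (hτ : 0 < τ.im)
    (hτ' : 0 < τ'.im) :
    HasSum (fun p : ℤ × ℤ => thetaCharTerm r z τ p.1 * thetaCharTerm r' z' τ' p.2)
      (thetaChar r z τ * thetaChar r' z' τ') :=
  (summable_norm_thetaCharTerm r z hτ).of_norm.hasSum.mul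
    (summable_norm_thetaCharTerm r' z' hτ').of_norm.hasSum
    (summable_mul_of_summable_norm (summable_norm_thetaCharTerm r z hτ)
      (summable_norm_thetaCharTerm r' z' hτ'))

lemma thetaCharTerm_add_one (r z τ : ℂ) (n : ℤ) :
    thetaCharTerm r (z + 1) τ n = cexp (2 * π * I * r) * thetaCharTerm r z τ n := by
  rw [thetaCharTerm, thetaCharTerm, ← Complex.exp_add,
    show π * I * (n + r) ^ 2 * τ + 2 * π * I * (n + r) * (z + 1)
      = 2 * π * I * r + (π * I * (n + r) ^ 2 * τ + 2 * π * I * (n + r) * z) + n * (2 * π * I)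
      by ring,
    Complex.exp_add _ (n * _), Complex.exp_int_mul_two_pi_mul_I, mul_one]

lemma thetaChar_add_one (r z τ : ℂ) :
    thetaChar r (z + 1) τ = cexp (2 * π * I * r) * thetaChar r z τ := by
  simp only [thetaChar, thetaCharTerm_add_one, tsum_mul_left]

lemma thetaChar_zero_add_one (z τ : ℂ) : thetaChar 0 (z + 1) τ = thetaChar 0 z τ := by
  simp [thetaChar_add_one]

lemma thetaChar_half_add_one (z τ : ℂ) :
    thetaChar (1 / 2) (z + 1) τ = -thetaChar (1 / 2) z τ := by
  rw [thetaChar_add_one, show 2 * π * I * (1 / 2 : ℂ) = π * I by ring, Complex.exp_pi_mul_I,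
    neg_one_mul]

lemma thetaCharTerm_half_mul_of_even (a b τ : ℂ) (j k : ℤ) :
    thetaCharTerm (1 / 2) a τ (j + k) * thetaCharTerm (1 / 2) b τ (j - k) =
      thetaCharTerm (1 / 2) (a + b) (2 * τ) j * thetaCharTerm 0 (a - b) (2 * τ) k := by
  simp only [thetaCharTerm, ← Complex.exp_add]
  push_cast
  ring_nf

lemma thetaCharTerm_half_mul_of_odd (a b τ : ℂ) (j k : ℤ) :
    thetaCharTerm (1 / 2) a τ (j + k) * thetaCharTerm (1 / 2) b τ (j - k - 1) =
      thetaCharTerm 0 (a + b) (2 * τ) j * thetaCharTerm (1 / 2) (a - b) (2 * τ) k := by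
  simp only [thetaCharTerm, ← Complex.exp_add]
  push_cast
  ring_nf

def evenOddEquiv : ℤ × ℤ ⊕ ℤ × ℤ ≃ ℤ × ℤ :=
  Equiv.ofBijective (Sum.elim (fun p => (p.1 + p.2, p.1 - p.2)) fun p => (p.1 + p.2, p.1 - p.2 - 1))
    (by
      constructor
      · rintro (⟨j, k⟩ | ⟨j, k⟩) (⟨j', k'⟩ | ⟨j', k'⟩) h <;>
          simp only [Sum.elim_inl, Sum.elim_inr, Prod.mk.injEq, Sum.inl.injEq,
            Sum.inr.injEq, reduceCtorEq] at h ⊢ <;> omega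
      · rintro ⟨m, n⟩
        rcases Int.even_or_odd (m - n) with ⟨k, hk⟩ | ⟨k, hk⟩
        · exact ⟨.inl (m - k, k), by simp only [Sum.elim_inl, Prod.mk.injEq]; omega⟩
        · exact ⟨.inr (m - k, k), by simp only [Sum.elim_inr, Prod.mk.injEq]; omega⟩)

theorem thetaChar_half_mul_thetaChar_half {τ : ℂ} (hτ : 0 < τ.im) (a b : ℂ) :
    thetaChar (1 / 2) a τ * thetaChar (1 / 2) b τ =
      thetaChar (1 / 2) (a + b) (2 * τ) * thetaChar 0 (a - b) (2 * τ) +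
        thetaChar 0 (a + b) (2 * τ) * thetaChar (1 / 2) (a - b) (2 * τ) := by
  have h2τ : 0 < (2 * τ).im := by simpa using hτ
  have hsplit : HasSum
      ((fun p : ℤ × ℤ => thetaCharTerm (1 / 2) a τ p.1 * thetaCharTerm (1 / 2) b τ p.2) ∘
        evenOddEquiv) _ :=
    HasSum.sum
      (by
        convert hasSum_thetaChar_mul_thetaChar (1 / 2) (a + b) 0 (a - b) h2τ h2τ using 1
        ext ⟨j, k⟩
        exact thetaCharTerm_half_mul_of_even a b τ j k)
      (by
        convert hasSum_thetaChar_mul_thetaChar 0 (a + b) (1 / 2) (a - b) h2τ h2τ using 1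
        ext ⟨j, k⟩
        exact thetaCharTerm_half_mul_of_odd a b τ j k)
  exact (hasSum_thetaChar_mul_thetaChar _ a _ b hτ hτ).unique (evenOddEquiv.hasSum_iff.mp hsplit)

lemma ω_im_pos : 0 < ω.im := by
  rw [ω, show 2 * (π : ℂ) * I / 3 = ((2 * π / 3 : ℝ) : ℂ) * I by push_cast; ring,
    Complex.exp_ofReal_mul_I_im]
  exact Real.sin_pos_of_pos_of_lt_pi (by positivity) (by linarith [Real.pi_pos])

lemma θf_mul_θf (x y : ℂ) :
    θf x * θf y =
      thetaChar 0 (x + y) (2 * ω) * thetaChar (1 / 2) (x - y) (2 * ω) -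
        thetaChar (1 / 2) (x + y) (2 * ω) * thetaChar 0 (x - y) (2 * ω) := by
  change -thetaChar (1 / 2) (x + 1 / 2) ω * -thetaChar (1 / 2) (y + 1 / 2) ω = _
  rw [neg_mul_neg, thetaChar_half_mul_thetaChar_half ω_im_pos,
    show x + 1 / 2 + (y + 1 / 2) = x + y + 1 by ring, show x + 1 / 2 - (y + 1 / 2) = x - y by ring,
    thetaChar_half_add_one, thetaChar_zero_add_one]
  ring

lemma θ2_mul_θ2 (x y : ℂ) :
    θ2 x * θ2 y =
      thetaChar 0 (x + y) (2 * ω) * thetaChar (1 / 2) (x - y) (2 * ω) +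
        thetaChar (1 / 2) (x + y) (2 * ω) * thetaChar 0 (x - y) (2 * ω) := by
  change -thetaChar (1 / 2) (x + 1 / 2 + 1 / 2) ω * -thetaChar (1 / 2) (y + 1 / 2 + 1 / 2) ω = _
  rw [neg_mul_neg, thetaChar_half_mul_thetaChar_half ω_im_pos,
    show x + 1 / 2 + 1 / 2 + (y + 1 / 2 + 1 / 2) = x + y + 1 + 1 by ring,
    show x + 1 / 2 + 1 / 2 - (y + 1 / 2 + 1 / 2) = x - y by ring,
    thetaChar_half_add_one, thetaChar_half_add_one, thetaChar_zero_add_one, thetaChar_zero_add_one]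
  ring

/-- the theta identity
θ(z+u)θ(z−u)θ₂(0)² = θ(z)²θ₂(u)² − θ₂(z)²θ(u)². -/
theorem stmt10 :
    ∀ z u : ℂ, θf (z + u) * θf (z - u) * (θ2 0) ^ 2 =
      (θf z) ^ 2 * (θ2 u) ^ 2 - (θ2 z) ^ 2 * (θf u) ^ 2 := by
  intro z u
  simp only [sq, θf_mul_θf, θ2_mul_θ2]
  ring_nf
end
end

section
/- Let θ be as in the context, let k ∈ ℂ, set z(k) := √3·k/(4πi), and define F_k(z) := exp((i/2)(z − conj z)·k)·θ(z − z(k))/θ(z) for z ∉ Λ. Then for every γ ∈ Λ and every z ∉ Λ one has F_k(z + γ) = F_k(z). -/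
noncomputable section

open Complex ComplexConjugate

/-- z(k) = √3 k / (4πi). -/
def zpt (k : ℂ) : ℂ := (Real.sqrt 3 : ℂ) * k / (4 * (Real.pi : ℂ) * Complex.I)

/-- F_k(z) = e^{(i/2)(z − z̄)k} θ(z − z(k)) / θ(z). -/
def Fk (k z : ℂ) : ℂ :=
  Complex.exp (Complex.I / 2 * (z - conj z) * k) * θf (z - zpt k) / θf z

/-!
θ is quasi-periodic: θ(z + 1) = −θ(z) and θ(z + ω) = −e^{−πiω − 2πiz} θ(z). In the quotient
θ(z − z(k))/θ(z) the sign and e^{−πiω − 2πiz} cancel, leaving the factor e^{2πi z(k)} = e^{√3k/2}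
for a shift by ω. Since conj ω = ω − √3 i, the prefactor e^{(i/2)(z − z̄)k} picks up exactly
e^{−√3k/2}, so F_k is periodic under 1 and ω, hence under all of Λ.
-/

open Function

def θTerm (n : ℤ) (z : ℂ) : ℂ :=
  Complex.exp ((Real.pi : ℂ) * I * ((n : ℂ) + 1/2)^2 * ω
    + 2 * (Real.pi : ℂ) * I * ((n : ℂ) + 1/2) * (z + 1/2))

lemma θf_eq_neg_tsum (z : ℂ) : θf z = -∑' n : ℤ, θTerm n z := rfl

lemma θTerm_add_one (n : ℤ) (z : ℂ) : θTerm n (z + 1) = -θTerm n z := by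
  rw [θTerm, θTerm, ← exp_add_pi_mul_I, exp_eq_exp_iff_exists_int]
  exact ⟨n, by ring⟩

lemma θTerm_add_ω (n : ℤ) (z : ℂ) :
    θTerm n (z + ω) =
      -Complex.exp (-(Real.pi * I * ω) - 2 * Real.pi * I * z) * θTerm (n + 1) z := by
  rw [θTerm, θTerm, neg_mul, ← exp_add, ← exp_sub_pi_mul_I]
  congr 1
  push_cast
  ring

lemma θf_add_one (z : ℂ) : θf (z + 1) = -θf z := by
  simp only [θf_eq_neg_tsum, θTerm_add_one, tsum_neg]

lemma θf_add_ω (z : ℂ) :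
    θf (z + ω) = -Complex.exp (-(Real.pi * I * ω) - 2 * Real.pi * I * z) * θf z := by
  have hshift := (Equiv.addRight (1 : ℤ)).tsum_eq (θTerm · z)
  simp only [Equiv.coe_addRight] at hshift
  rw [θf_eq_neg_tsum, θf_eq_neg_tsum, tsum_congr (θTerm_add_ω · z), tsum_mul_left, hshift]
  ring

lemma ω_eq : ω = -1/2 + Real.sqrt 3 / 2 * I := by
  have hcos : Real.cos (2 * Real.pi / 3) = -1/2 := by
    rw [show 2 * Real.pi / 3 = Real.pi - Real.pi / 3 by ring, Real.cos_pi_sub,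
      Real.cos_pi_div_three]
    norm_num
  have hsin : Real.sin (2 * Real.pi / 3) = Real.sqrt 3 / 2 := by
    rw [show 2 * Real.pi / 3 = Real.pi - Real.pi / 3 by ring, Real.sin_pi_sub,
      Real.sin_pi_div_three]
  rw [ω, show 2 * (Real.pi : ℂ) * I / 3 = (2 * Real.pi / 3 : ℝ) * I by push_cast; ring,
    exp_mul_I, ← ofReal_cos, ← ofReal_sin, hcos, hsin]
  push_cast
  ring

lemma conj_ω : conj ω = ω - Real.sqrt 3 * I := by
  rw [ω_eq]
  simp only [map_add, map_mul, map_div₀, map_neg, map_one, map_ofNat, conj_ofReal, conj_I]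
  ring

lemma two_pi_I_mul_zpt (k : ℂ) : 2 * Real.pi * I * zpt k = Real.sqrt 3 * k / 2 := by
  have hπ : (Real.pi : ℂ) ≠ 0 := ofReal_ne_zero.mpr Real.pi_ne_zero
  rw [zpt]
  field_simp
  ring

lemma Fk_periodic_one (k : ℂ) : Periodic (Fk k) 1 := by
  intro z
  rw [Fk, Fk, add_sub_right_comm z 1 (zpt k), θf_add_one, θf_add_one, mul_neg,
    neg_div_neg_eq, map_add, map_one, add_sub_add_right_eq_sub]

lemma Fk_periodic_ω (k : ℂ) : Periodic (Fk k) ω := by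
  intro z
  set E := Complex.exp (-(Real.pi * I * ω) - 2 * Real.pi * I * z) with hE_def
  have hprefactor : Complex.exp (I / 2 * (z + ω - conj (z + ω)) * k)
      = Complex.exp (I / 2 * (z - conj z) * k) * Complex.exp (-(2 * Real.pi * I * zpt k)) := by
    rw [← exp_add, map_add, conj_ω, two_pi_I_mul_zpt]
    congr 1
    linear_combination (Real.sqrt 3 * k / 2) * I_sq
  have hnum :
      θf (z + ω - zpt k) = -E * Complex.exp (2 * Real.pi * I * zpt k) * θf (z - zpt k) := by
    rw [add_sub_right_comm z ω (zpt k), θf_add_ω, hE_def, neg_mul, neg_mul, neg_mul, ← exp_add]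
    ring_nf
  have hE : -E ≠ 0 := neg_ne_zero.mpr (exp_ne_zero _)
  rw [Fk, Fk, hprefactor, hnum, θf_add_ω, ← mul_div_mul_left _ (θf z) hE, exp_neg]
  congr 1
  field_simp

/-- F_k is Λ-periodic on ℂ ∖ Λ. -/
theorem stmt11 (k : ℂ) :
    ∀ γ ∈ Lam, ∀ z : ℂ, z ∉ Lam → Fk k (z + γ) = Fk k z := by
  rintro γ ⟨m, n, rfl⟩ z -
  have hperiodic := ((Fk_periodic_one k).int_mul m).add_period ((Fk_periodic_ω k).int_mul n)
  rw [mul_one] at hperiodic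
  exact hperiodic z
end
end
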